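/- Let E be an m×n real random matrix that is (C₁, c₁, γ)-concentrated for constants C₁, c₁, γ > 0, and let A be a deterministic m×n real matrix of rank r with singular values σ₁ ≥ ⋯ ≥ σ_r > 0. Let 1 ≤ j ≤ r be an integer and let σ_j' denote the j-th largest singular value of A+E. Then, for any t > 0, with probability at least 1 − 2·C₁·9^j·exp(−c₁ tᵞ/4ᵞ), one has σ_j' ≥ σ_j − t. -/

import Mathlib

open MeasureTheory ProbabilityTheory Matrix

theorem Matrix.isHermitian_transpose_mul_self {m n : Type*} [Fintype m] (A : Matrix m n ℝ) :
    (Aᵀ * A).IsHermitian := by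
  simpa using Matrix.isHermitian_conjTranspose_mul_self A

noncomputable def sval {m n : ℕ} (A : Matrix (Fin m) (Fin n) ℝ) (k : ℕ) : ℝ :=
  if h : k - 1 < n then
    Real.sqrt (((Matrix.isHermitian_transpose_mul_self A).eigenvalues ∘
      Tuple.sort (Matrix.isHermitian_transpose_mul_self A).eigenvalues)
      (Fin.rev ⟨k - 1, h⟩))
  else 0

noncomputable def spNorm {m n : Type*} [Fintype m] [Fintype n] [DecidableEq n]
    (A : Matrix m n ℝ) : ℝ :=
  ‖LinearMap.toContinuousLinearMap (Matrix.toEuclideanLin A)‖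

noncomputable def sinAngle {d : ℕ} (u v : Fin d → ℝ) : ℝ :=
  Real.sqrt (1 - (u ⬝ᵥ v) ^ 2 / ((u ⬝ᵥ u) * (v ⬝ᵥ v)))

def Concentrated {Ω : Type*} [MeasurableSpace Ω] (μ : Measure Ω) {m n : ℕ}
    (E : Ω → Matrix (Fin m) (Fin n) ℝ) (C₁ c₁ γ : ℝ) : Prop :=
  ∀ (u : Fin m → ℝ) (v : Fin n → ℝ), u ⬝ᵥ u = 1 → v ⬝ᵥ v = 1 →
    ∀ t : ℝ, 0 < t →
      μ {ω | t < |u ⬝ᵥ ((E ω) *ᵥ v)|} ≤ ENNReal.ofReal (C₁ * Real.exp (-c₁ * t ^ γ))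

noncomputable def symMat {m n : ℕ} (E : Matrix (Fin m) (Fin n) ℝ) :
    Matrix (Fin (m + n)) (Fin (m + n)) ℝ :=
  (Matrix.reindex finSumFinEquiv finSumFinEquiv) (Matrix.fromBlocks 0 E Eᵀ 0)

noncomputable def eigVal {d : ℕ} (M : Matrix (Fin d) (Fin d) ℝ) (k : ℕ) : ℝ := by
  classical
  exact if hM : M.IsHermitian then
    (if h : k - 1 < d then
      ((hM.eigenvalues ∘ Tuple.sort hM.eigenvalues) (Fin.rev ⟨k - 1, h⟩))
    else 0)
  else 0

noncomputable def toE {n : ℕ} (v : Fin n → ℝ) : EuclideanSpace ℝ (Fin n) :=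
  (WithLp.equiv 2 (Fin n → ℝ)).symm v

noncomputable def projSub {n : ℕ} (K : Submodule ℝ (EuclideanSpace ℝ (Fin n))) :
    EuclideanSpace ℝ (Fin n) →L[ℝ] EuclideanSpace ℝ (Fin n) :=
  K.subtypeL.comp K.orthogonalProjectionOnto

noncomputable def projSpan {n : ℕ} (S : Set (Fin n → ℝ)) :
    EuclideanSpace ℝ (Fin n) →L[ℝ] EuclideanSpace ℝ (Fin n) :=
  projSub (Submodule.span ℝ (toE '' S))

noncomputable def sinAngleSub {n : ℕ} (S T : Set (Fin n → ℝ)) : ℝ :=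
  ‖projSpan S - projSpan T‖

def IsBernoulliMatrix {Ω : Type*} [MeasurableSpace Ω] (μ : Measure Ω) {n : ℕ}
    (E : Ω → Matrix (Fin n) (Fin n) ℝ) : Prop :=
  (∀ i j, Measurable fun ω => E ω i j) ∧
  iIndepFun (m := fun _ : Fin n × Fin n => (inferInstance : MeasurableSpace ℝ))
    (fun p ω => E ω p.1 p.2) μ ∧
  (∀ i j, μ {ω | E ω i j = 1} = ENNReal.ofReal (1/2) ∧
          μ {ω | E ω i j = -1} = ENNReal.ofReal (1/2))


/-!
Let `x₁, …, x_j` and `y₁, …, y_j` be right and left singular vectors of `A` for its `j` largest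
singular values, so `A xₐ = σₐ yₐ` with `σₐ ≥ σ_j`. For `c ∈ ℝʲ` put `u = ∑ cₐ yₐ` and
`v = ∑ cₐ xₐ`; then `⟪u, A v⟫ ≥ σ_j ‖c‖²`. If moreover `|⟪u, E v⟫| ≤ t ‖c‖²` for all `c`, then
Cauchy–Schwarz gives `‖(A + E) v‖ ≥ (σ_j - t) ‖v‖` on the `j`-dimensional space of the `v`'s,
and Courant–Fischer gives `σ_j(A + E) ≥ σ_j - t`.

The quadratic form `c ↦ ⟪u, E v⟫` is controlled on the unit sphere of `ℝʲ` by its values on a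
`1/4`-net, which by a volume argument can be chosen with at most `9ʲ` points: a bound `t / 2` on
the net gives the bound `t` everywhere. A union bound over the net, using the concentration
hypothesis at level `t / 2` and `(t / 2)^γ ≥ t^γ / 4^γ`, finishes the proof.
-/

open Metric Module
open scoped RealInnerProductSpace

section Packing
variable {V : Type*} [NormedAddCommGroup V] [NormedSpace ℝ V] [FiniteDimensional ℝ V]

theorem card_le_of_pairwise_lt_dist {P : Finset V} (hP : ∀ p ∈ P, ‖p‖ ≤ 1) {ε : ℝ}
    (hε : 0 < ε) (hsep : (P : Set V).Pairwise fun p q => ε < dist p q) :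
    (P.card : ℝ) ≤ (1 + 2 / ε) ^ finrank ℝ V := by
  borelize V
  set μ : Measure V := Measure.addHaar
  set d := finrank ℝ V
  have hdisj : (P : Set V).PairwiseDisjoint fun p => closedBall p (ε / 2) :=
    fun p hp q hq hpq => closedBall_disjoint_closedBall (by linarith [hsep hp hq hpq])
  have hsub : (⋃ p ∈ P, closedBall p (ε / 2)) ⊆ closedBall 0 (1 + ε / 2) := by
    simp only [Set.iUnion_subset_iff]
    intro p hp z hz
    rw [mem_closedBall, dist_eq_norm] at hz
    rw [mem_closedBall_zero_iff]
    linarith [norm_le_norm_add_norm_sub' z p, hP p hp]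
  have hvol : (P.card : ENNReal) * ENNReal.ofReal ((ε / 2) ^ d) * μ (ball 0 1) ≤
      ENNReal.ofReal ((1 + ε / 2) ^ d) * μ (ball 0 1) :=
    calc (P.card : ENNReal) * ENNReal.ofReal ((ε / 2) ^ d) * μ (ball 0 1)
        = μ (⋃ p ∈ P, closedBall p (ε / 2)) := by
          rw [measure_biUnion_finset hdisj fun p _ => measurableSet_closedBall,
            Finset.sum_congr rfl fun p _ => μ.addHaar_closedBall p (by positivity),
            Finset.sum_const, nsmul_eq_mul, mul_assoc]
      _ ≤ μ (closedBall 0 (1 + ε / 2)) := measure_mono hsub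
      _ = _ := μ.addHaar_closedBall 0 (by positivity)
  rw [ENNReal.mul_le_mul_iff_left (measure_ball_pos μ 0 one_pos).ne' measure_ball_lt_top.ne,
    ← ENNReal.ofReal_natCast, ← ENNReal.ofReal_mul (by positivity),
    ENNReal.ofReal_le_ofReal_iff (by positivity)] at hvol
  rw [show 1 + 2 / ε = (1 + ε / 2) / (ε / 2) by field_simp; ring, div_pow,
    le_div_iff₀ (by positivity)]
  exact hvol

theorem exists_finset_net_sphere {ε : ℝ} (hε : 0 < ε) :
    ∃ N : Finset V, (∀ p ∈ N, ‖p‖ = 1) ∧ (N.card : ℝ) ≤ (1 + 2 / ε) ^ finrank ℝ V ∧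
      ∀ c : V, ‖c‖ = 1 → ∃ p ∈ N, ‖c - p‖ ≤ ε := by
  classical
  let IsPacking : ℕ → Prop := fun k => ∃ N : Finset V, (∀ p ∈ N, ‖p‖ = 1) ∧
    (N : Set V).Pairwise (fun p q => ε < dist p q) ∧ N.card = k
  have card_le {N : Finset V} (hN : ∀ p ∈ N, ‖p‖ = 1)
      (hsep : (N : Set V).Pairwise fun p q => ε < dist p q) :
      N.card ≤ ⌊(1 + 2 / ε) ^ finrank ℝ V⌋₊ :=
    Nat.le_floor (card_le_of_pairwise_lt_dist (fun p hp => (hN p hp).le) hε hsep)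
  -- a packing of maximal size is a net
  obtain ⟨N, hN, hsep, hNcard⟩ :
      IsPacking (Nat.findGreatest IsPacking ⌊(1 + 2 / ε) ^ finrank ℝ V⌋₊) :=
    Nat.findGreatest_spec (Nat.zero_le _) ⟨∅, by simp, by simp, rfl⟩
  refine ⟨N, hN, card_le_of_pairwise_lt_dist (fun p hp => (hN p hp).le) hε hsep, ?_⟩
  by_contra! hfar
  obtain ⟨c, hc, hcfar⟩ := hfar
  have hcN : c ∉ N := fun hcN => by simpa using (hcfar c hcN).trans_le' hε.le
  have hN' : ∀ p ∈ insert c N, ‖p‖ = 1 := by simpa [hc] using hN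
  have hsep' : (↑(insert c N) : Set V).Pairwise fun p q => ε < dist p q := by
    rw [Finset.coe_insert, Set.pairwise_insert]
    exact ⟨hsep, fun p hp _ => ⟨by rw [dist_eq_norm]; exact hcfar p hp,
      by rw [dist_comm, dist_eq_norm]; exact hcfar p hp⟩⟩
  have hpacking : IsPacking (insert c N).card := ⟨insert c N, hN', hsep', rfl⟩
  have := Nat.le_findGreatest (card_le hN' hsep') hpacking
  rw [Finset.card_insert_of_notMem hcN, ← hNcard] at this
  omega

end Packing

section QuadraticForm
variable {V G : Type*} [NormedAddCommGroup V] [InnerProductSpace ℝ V]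
  [NormedAddCommGroup G] [InnerProductSpace ℝ G]

theorem ContinuousLinearMap.norm_le_of_net {T : V →L[ℝ] V} (hT : (T : V →ₗ[ℝ] V).IsSymmetric)
    {N : Set V} {ε a : ℝ} (hε₀ : 0 ≤ ε) (hε : ε < 1 / 2) (ha : 0 ≤ a)
    (hN : ∀ p ∈ N, ‖p‖ = 1) (hnet : ∀ c : V, ‖c‖ = 1 → ∃ p ∈ N, ‖c - p‖ ≤ ε)
    (hTN : ∀ p ∈ N, |⟪T p, p⟫| ≤ a) : ‖T‖ ≤ a / (1 - 2 * ε) := by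
  have hsphere : ∀ c : V, ‖c‖ = 1 → |⟪T c, c⟫| ≤ a + 2 * ε * ‖T‖ := by
    intro c hc
    obtain ⟨p, hpN, hcp⟩ := hnet c hc
    -- symmetry of `T` turns the difference of the two quadratic values into a bilinear term
    have hdiff : ⟪T c, c⟫ - ⟪T p, p⟫ = ⟪T (c - p), c + p⟫ := by
      have := hT c p
      simp only [ContinuousLinearMap.coe_coe] at this
      simp only [map_sub, inner_sub_left, inner_add_right, this, real_inner_comm c (T p)]
      ring
    have hcross : |⟪T (c - p), c + p⟫| ≤ ‖T‖ * ε * 2 :=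
      calc |⟪T (c - p), c + p⟫| ≤ ‖T (c - p)‖ * ‖c + p‖ := abs_real_inner_le_norm _ _
        _ ≤ ‖T‖ * ‖c - p‖ * (‖c‖ + ‖p‖) :=
          mul_le_mul (T.le_opNorm _) (norm_add_le _ _) (norm_nonneg _) (by positivity)
        _ ≤ ‖T‖ * ε * 2 := by
          rw [hc, hN p hpN]
          gcongr
          norm_num
    have := abs_sub_abs_le_abs_sub ⟪T c, c⟫ ⟪T p, p⟫
    rw [hdiff] at this
    linarith [hTN p hpN]
  have hrayleigh : ∀ x : V, |T.rayleighQuotient x| ≤ a + 2 * ε * ‖T‖ := by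
    intro x
    rcases eq_or_ne x 0 with rfl | hx
    · simp only [ContinuousLinearMap.rayleighQuotient_apply_zero, abs_zero]
      positivity
    have hx' : ‖x‖ ≠ 0 := norm_ne_zero_iff.mpr hx
    have hunit : ‖(‖x‖⁻¹ : ℝ) • x‖ = 1 := by
      rw [norm_smul, norm_inv, norm_norm, inv_mul_cancel₀ hx']
    rw [← T.rayleigh_smul x (inv_ne_zero hx'), ContinuousLinearMap.rayleighQuotient,
      ContinuousLinearMap.reApplyInnerSelf_apply, hunit]
    simpa [real_inner_comm] using hsphere _ hunit
  have : ‖T‖ ≤ a + 2 * ε * ‖T‖ :=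
    (T.norm_eq_iSup_rayleighQuotient hT).trans_le (ciSup_le hrayleigh)
  rw [le_div_iff₀ (by linarith)]
  linarith

variable [CompleteSpace V] [CompleteSpace G]

theorem abs_inner_le_of_net (U L : V →L[ℝ] G) {N : Set V} {ε a : ℝ} (hε₀ : 0 ≤ ε)
    (hε : ε < 1 / 2) (ha : 0 ≤ a) (hN : ∀ p ∈ N, ‖p‖ = 1)
    (hnet : ∀ c : V, ‖c‖ = 1 → ∃ p ∈ N, ‖c - p‖ ≤ ε) (hUL : ∀ p ∈ N, |⟪U p, L p⟫| ≤ a)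
    (c : V) : |⟪U c, L c⟫| ≤ a / (1 - 2 * ε) * ‖c‖ ^ 2 := by
  set T := U.adjoint ∘L L + L.adjoint ∘L U
  have hT : ∀ v, ⟪T v, v⟫ = 2 * ⟪U v, L v⟫ := fun v => by
    simp [T, inner_add_left, ContinuousLinearMap.adjoint_inner_left, real_inner_comm (U v)]
    ring
  have hTsymm : (T : V →ₗ[ℝ] V).IsSymmetric := fun v w => by
    simp [T, inner_add_left, inner_add_right, ContinuousLinearMap.adjoint_inner_left,
      ContinuousLinearMap.adjoint_inner_right]
    ring
  have hnorm : ‖T‖ ≤ 2 * a / (1 - 2 * ε) :=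
    T.norm_le_of_net (a := 2 * a) hTsymm hε₀ hε (by positivity) hN hnet fun p hp => by
      rw [hT, abs_mul, abs_two]
      linarith [hUL p hp]
  have hTc : |⟪T c, c⟫| ≤ ‖T‖ * ‖c‖ ^ 2 :=
    calc |⟪T c, c⟫| ≤ ‖T c‖ * ‖c‖ := abs_real_inner_le_norm _ _
      _ ≤ ‖T‖ * ‖c‖ * ‖c‖ := by gcongr; exact T.le_opNorm c
      _ = ‖T‖ * ‖c‖ ^ 2 := by ring
  rw [hT, abs_mul, abs_two] at hTc
  have : ‖T‖ * ‖c‖ ^ 2 ≤ 2 * (a / (1 - 2 * ε) * ‖c‖ ^ 2) := by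
    rw [← mul_assoc, ← mul_div_assoc]
    gcongr
  linarith

end QuadraticForm

section Orthonormal
variable {ι E F : Type*} [Fintype ι] [NormedAddCommGroup E] [InnerProductSpace ℝ E]
  [NormedAddCommGroup F] [InnerProductSpace ℝ F]

noncomputable def euclideanCombination (v : ι → E) : EuclideanSpace ℝ ι →L[ℝ] E :=
  ∑ i, (EuclideanSpace.proj i).smulRight (v i)

theorem euclideanCombination_apply (v : ι → E) (c : EuclideanSpace ℝ ι) :
    euclideanCombination v c = ∑ i, c i • v i := by
  simp [euclideanCombination]

theorem LinearMap.apply_euclideanCombination (f : E →ₗ[ℝ] F) (v : ι → E)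
    (c : EuclideanSpace ℝ ι) : f (euclideanCombination v c) = euclideanCombination (f ∘ v) c := by
  simp [euclideanCombination_apply]

theorem Orthonormal.inner_euclideanCombination {v : ι → E} (hv : Orthonormal ℝ v)
    (c d : EuclideanSpace ℝ ι) :
    ⟪euclideanCombination v c, euclideanCombination v d⟫ = ⟪c, d⟫ := by
  simp [euclideanCombination_apply, hv.inner_sum, PiLp.inner_apply, mul_comm]

theorem Orthonormal.norm_euclideanCombination {v : ι → E} (hv : Orthonormal ℝ v)
    (c : EuclideanSpace ℝ ι) : ‖euclideanCombination v c‖ = ‖c‖ := by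
  rw [norm_eq_sqrt_real_inner, hv.inner_euclideanCombination, ← norm_eq_sqrt_real_inner]

theorem Orthonormal.finrank_range_euclideanCombination {v : ι → E} (hv : Orthonormal ℝ v) :
    finrank ℝ (euclideanCombination v : EuclideanSpace ℝ ι →ₗ[ℝ] E).range =
      Fintype.card ι := by
  rw [LinearMap.finrank_range_of_inj, finrank_euclideanSpace]
  refine (injective_iff_map_eq_zero _).2 fun c hc => ?_
  rw [← norm_eq_zero, ← hv.norm_euclideanCombination c]
  simpa using hc

theorem Orthonormal.inner_apply_le_of_mem_span {e : ι → E} (he : Orthonormal ℝ e)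
    {T : E →ₗ[ℝ] E} {ev : ι → ℝ} (hTe : ∀ i, T (e i) = ev i • e i) {μ : ℝ}
    (hev : ∀ i, ev i ≤ μ) {v : E} (hv : v ∈ Submodule.span ℝ (Set.range e)) :
    ⟪T v, v⟫ ≤ μ * ‖v‖ ^ 2 := by
  obtain ⟨c, rfl⟩ := (Submodule.mem_span_range_iff_exists_fun ℝ).1 hv
  have hTv : T (∑ i, c i • e i) = ∑ i, (c i * ev i) • e i := by
    simp [hTe, smul_smul, mul_comm]
  rw [hTv, he.inner_sum, ← real_inner_self_eq_norm_sq, he.inner_sum, Finset.mul_sum]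
  refine Finset.sum_le_sum fun i _ => ?_
  simp only [conj_trivial]
  nlinarith [mul_self_nonneg (c i), hev i]

end Orthonormal

section Gram
variable {m n : ℕ} (M : Matrix (Fin m) (Fin n) ℝ)

theorem inner_toEuclideanLin_transpose_mul_self (v w : EuclideanSpace ℝ (Fin n)) :
    ⟪toEuclideanLin (Mᵀ * M) v, w⟫ = ⟪toEuclideanLin M v, toEuclideanLin M w⟫ := by
  have : toEuclideanLin (Mᵀ * M) v =
      LinearMap.adjoint (toEuclideanLin M) (toEuclideanLin M v) := by
    rw [← toEuclideanLin_conjTranspose_eq_adjoint, conjTranspose_eq_transpose_of_trivial]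
    simp [toLpLin_apply, mulVec_mulVec]
  rw [this, LinearMap.adjoint_inner_left]

noncomputable def gramEigenvalue (k : Fin n) : ℝ :=
  (isHermitian_transpose_mul_self M).eigenvalues
    (Tuple.sort (isHermitian_transpose_mul_self M).eigenvalues k)

noncomputable def gramEigenvector (k : Fin n) : EuclideanSpace ℝ (Fin n) :=
  (isHermitian_transpose_mul_self M).eigenvectorBasis
    (Tuple.sort (isHermitian_transpose_mul_self M).eigenvalues k)

theorem monotone_gramEigenvalue : Monotone (gramEigenvalue M) := Tuple.monotone_sort _

theorem orthonormal_gramEigenvector : Orthonormal ℝ (gramEigenvector M) :=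
  (isHermitian_transpose_mul_self M).eigenvectorBasis.orthonormal.comp _
    (Tuple.sort _).injective

theorem toEuclideanLin_transpose_mul_self_gramEigenvector (k : Fin n) :
    toEuclideanLin (Mᵀ * M) (gramEigenvector M k) =
      gramEigenvalue M k • gramEigenvector M k := by
  rw [toLpLin_apply, gramEigenvector, IsHermitian.mulVec_eigenvectorBasis]
  rfl

theorem sval_nonneg (k : ℕ) : 0 ≤ sval M k := by
  unfold sval
  split_ifs
  exacts [Real.sqrt_nonneg _, le_rfl]

theorem sval_of_lt {k : ℕ} (hk : n < k) : sval M k = 0 := by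
  rw [sval, dif_neg (by omega)]

theorem sval_eq_sqrt_gramEigenvalue {k : ℕ} (hk : 1 ≤ k) (hkn : k ≤ n) :
    sval M k = √(gramEigenvalue M ⟨n - k, by omega⟩) := by
  rw [sval, dif_pos (by omega)]
  congr 3
  ext
  simp [Fin.rev]
  omega

theorem le_sval_of_finrank_le {j : ℕ} (hj : 1 ≤ j)
    {W : Submodule ℝ (EuclideanSpace ℝ (Fin n))} (hW : j ≤ finrank ℝ W) {s : ℝ}
    (hs : ∀ v ∈ W, s * ‖v‖ ≤ ‖toEuclideanLin M v‖) : s ≤ sval M j := by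
  rcases le_or_gt s 0 with hs0 | hs0
  · exact hs0.trans (sval_nonneg M j)
  have hjn : j ≤ n := hW.trans ((Submodule.finrank_le W).trans_eq finrank_euclideanSpace_fin)
  set e : Fin (n - j + 1) → EuclideanSpace ℝ (Fin n) :=
    gramEigenvector M ∘ Fin.castLE (by omega)
  have he : Orthonormal ℝ e := (orthonormal_gramEigenvector M).comp _ (Fin.castLE_injective _)
  set K := Submodule.span ℝ (Set.range e)
  have hK : finrank ℝ K = n - j + 1 := by
    rw [finrank_span_eq_card he.linearIndependent, Fintype.card_fin]
  -- `W` and `K` have dimensions adding up to more than `n`, so they meet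
  obtain ⟨v, hvW, hvK, hv0⟩ : ∃ v ∈ W, v ∈ K ∧ v ≠ 0 := by
    by_contra! h
    have := Submodule.finrank_add_finrank_le_of_disjoint
      (Submodule.disjoint_def.2 fun v hvW hvK => h v hvW hvK)
    rw [hK, finrank_euclideanSpace_fin] at this
    omega
  have hKbound : ‖toEuclideanLin M v‖ ^ 2 ≤ gramEigenvalue M ⟨n - j, by omega⟩ * ‖v‖ ^ 2 := by
    rw [← real_inner_self_eq_norm_sq, ← inner_toEuclideanLin_transpose_mul_self]
    exact he.inner_apply_le_of_mem_span
      (fun i => toEuclideanLin_transpose_mul_self_gramEigenvector M _)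
      (fun i => monotone_gramEigenvalue M (Fin.le_iff_val_le_val.2 (by simp; omega))) hvK
  have : (s * ‖v‖) ^ 2 ≤ gramEigenvalue M ⟨n - j, by omega⟩ * ‖v‖ ^ 2 :=
    (pow_le_pow_left₀ (by positivity) (hs v hvW) 2).trans hKbound
  rw [mul_pow] at this
  rw [sval_eq_sqrt_gramEigenvalue M hj hjn, Real.le_sqrt' hs0]
  exact le_of_mul_le_mul_right this (by positivity [norm_pos_iff.2 hv0])

theorem exists_orthonormal_singularVectors {j : ℕ} (hj : 1 ≤ j) (hpos : 0 < sval M j) :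
    ∃ (x : Fin j → EuclideanSpace ℝ (Fin n)) (y : Fin j → EuclideanSpace ℝ (Fin m))
      (σ : Fin j → ℝ), Orthonormal ℝ x ∧ Orthonormal ℝ y ∧
      (∀ a, toEuclideanLin M (x a) = σ a • y a) ∧ ∀ a, sval M j ≤ σ a := by
  have hjn : j ≤ n := by
    by_contra! h
    exact hpos.ne' (sval_of_lt M h)
  set ι : Fin j → Fin n := fun a => ⟨n - j + a, by omega⟩
  have hι : Function.Injective ι := fun a b h => Fin.ext (by simpa [ι] using h)
  set σ : Fin j → ℝ := fun a => √(gramEigenvalue M (ι a))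
  have hσ : ∀ a, sval M j ≤ σ a := fun a => by
    rw [sval_eq_sqrt_gramEigenvalue M hj hjn]
    exact Real.sqrt_le_sqrt (monotone_gramEigenvalue M (Fin.mk_le_mk.2 (by simp)))
  have hσpos : ∀ a, 0 < σ a := fun a => hpos.trans_le (hσ a)
  have hx := (orthonormal_gramEigenvector M).comp ι hι
  refine ⟨_, fun a => (σ a)⁻¹ • toEuclideanLin M (gramEigenvector M (ι a)), σ, hx, ?_,
    fun a => (smul_inv_smul₀ (hσpos a).ne' _).symm, hσ⟩
  rw [orthonormal_iff_ite] at hx ⊢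
  intro a b
  rw [real_inner_smul_left, real_inner_smul_right, ← inner_toEuclideanLin_transpose_mul_self,
    toEuclideanLin_transpose_mul_self_gramEigenvector, real_inner_smul_left]
  simp only [Function.comp_apply] at hx
  rw [hx]
  split_ifs with hab
  · subst hab
    have hev : 0 < gramEigenvalue M (ι a) := Real.sqrt_pos.1 (hσpos a)
    have : σ a ^ 2 = gramEigenvalue M (ι a) := Real.sq_sqrt hev.le
    field_simp
    simp [this, hev.ne']
  · simp

end Gram

section Perturbation
variable {m n : ℕ}

theorem le_sval_of_orthonormal {M : Matrix (Fin m) (Fin n) ℝ} {j : ℕ} (hj : 1 ≤ j)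
    {x : Fin j → EuclideanSpace ℝ (Fin n)} {y : Fin j → EuclideanSpace ℝ (Fin m)}
    (hx : Orthonormal ℝ x) (hy : Orthonormal ℝ y) {s : ℝ}
    (hs : ∀ c, s * ‖c‖ ^ 2 ≤
      ⟪euclideanCombination y c, toEuclideanLin M (euclideanCombination x c)⟫) :
    s ≤ sval M j := by
  refine le_sval_of_finrank_le M hj
    (W := (euclideanCombination x : EuclideanSpace ℝ (Fin j) →ₗ[ℝ] _).range)
    (by rw [hx.finrank_range_euclideanCombination, Fintype.card_fin]) ?_
  rintro _ ⟨c, rfl⟩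
  have hcs := (hs c).trans (real_inner_le_norm _ _)
  rw [hy.norm_euclideanCombination] at hcs
  simp only [ContinuousLinearMap.coe_coe]
  rw [hx.norm_euclideanCombination]
  rcases (norm_nonneg c).eq_or_lt with hc | hc
  · simp [← hc]
  · exact le_of_mul_le_mul_left (by linarith) hc

theorem sub_le_sval_add_of_net {A F : Matrix (Fin m) (Fin n) ℝ} {j : ℕ} (hj : 1 ≤ j)
    {x : Fin j → EuclideanSpace ℝ (Fin n)} {y : Fin j → EuclideanSpace ℝ (Fin m)}
    {σ : Fin j → ℝ} (hx : Orthonormal ℝ x) (hy : Orthonormal ℝ y)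
    (hAxy : ∀ a, toEuclideanLin A (x a) = σ a • y a) {s : ℝ} (hσ : ∀ a, s ≤ σ a)
    {N : Set (EuclideanSpace ℝ (Fin j))} (hN : ∀ p ∈ N, ‖p‖ = 1)
    (hnet : ∀ c : EuclideanSpace ℝ (Fin j), ‖c‖ = 1 → ∃ p ∈ N, ‖c - p‖ ≤ 1 / 4)
    {t : ℝ} (ht : 0 ≤ t)
    (hF : ∀ p ∈ N,
      |⟪euclideanCombination y p, toEuclideanLin F (euclideanCombination x p)⟫| ≤ t / 2) :
    s - t ≤ sval (A + F) j := by
  refine le_sval_of_orthonormal hj hx hy fun c => ?_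
  have hA : s * ‖c‖ ^ 2 ≤
      ⟪euclideanCombination y c, toEuclideanLin A (euclideanCombination x c)⟫ := by
    rw [LinearMap.apply_euclideanCombination]
    simp only [euclideanCombination_apply, Function.comp_apply, hAxy, smul_smul]
    rw [hy.inner_sum, EuclideanSpace.norm_sq_eq, Finset.mul_sum]
    refine Finset.sum_le_sum fun a _ => ?_
    simp only [conj_trivial, Real.norm_eq_abs, sq_abs]
    nlinarith [hσ a, sq_nonneg (c a)]
  have hF' : |⟪euclideanCombination y c, toEuclideanLin F (euclideanCombination x c)⟫| ≤
      t * ‖c‖ ^ 2 := by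
    have := abs_inner_le_of_net (euclideanCombination y)
      (euclideanCombination (toEuclideanLin F ∘ x)) (a := t / 2) (by norm_num) (by norm_num)
      (by positivity) hN hnet
      (fun p hp => by rw [← LinearMap.apply_euclideanCombination]; exact hF p hp) c
    rw [← LinearMap.apply_euclideanCombination] at this
    convert this using 2
    ring
  rw [map_add, LinearMap.add_apply, inner_add_right]
  linarith [neg_abs_le ⟪euclideanCombination y c, toEuclideanLin F (euclideanCombination x c)⟫]

end Perturbation

theorem Concentrated.measure_lt_abs_inner_le {Ω : Type*} [MeasurableSpace Ω] {μ : Measure Ω}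
    {m n : ℕ} {E : Ω → Matrix (Fin m) (Fin n) ℝ} {C₁ c₁ γ : ℝ} (hE : Concentrated μ E C₁ c₁ γ)
    {u : EuclideanSpace ℝ (Fin m)} {v : EuclideanSpace ℝ (Fin n)} (hu : ‖u‖ = 1) (hv : ‖v‖ = 1)
    {t : ℝ} (ht : 0 < t) :
    μ {ω | t < |⟪u, toEuclideanLin (E ω) v⟫|} ≤
      ENNReal.ofReal (C₁ * Real.exp (-c₁ * t ^ γ)) := by
  have hdot : ∀ w : EuclideanSpace ℝ (Fin m), ⟪u, w⟫ = u.ofLp ⬝ᵥ w.ofLp := fun w => by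
    rw [EuclideanSpace.inner_eq_star_dotProduct, star_trivial, dotProduct_comm]
  have hunit : ∀ {k : ℕ} (w : EuclideanSpace ℝ (Fin k)), ‖w‖ = 1 → w.ofLp ⬝ᵥ w.ofLp = 1 := by
    intro k w hw
    have := EuclideanSpace.inner_eq_star_dotProduct w w
    rw [star_trivial] at this
    rw [← this, real_inner_self_eq_norm_sq, hw, one_pow]
  simpa [hdot, toLpLin_apply] using hE u.ofLp v.ofLp (hunit u hu) (hunit v hv) t ht

theorem ofReal_one_sub_card_mul_le_measure {Ω ι : Type*} [MeasurableSpace Ω] {μ : Measure Ω}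
    [IsProbabilityMeasure μ] {G : Set Ω} (N : Finset ι) (S : ι → Set Ω)
    (hG : Gᶜ ⊆ ⋃ i ∈ N, S i) {δ : ℝ} (hδ : 0 ≤ δ)
    (hS : ∀ i ∈ N, μ (S i) ≤ ENNReal.ofReal δ) :
    ENNReal.ofReal (1 - N.card * δ) ≤ μ G := by
  have hbad : μ Gᶜ ≤ ENNReal.ofReal (N.card * δ) :=
    calc μ Gᶜ ≤ ∑ i ∈ N, μ (S i) := (measure_mono hG).trans (measure_biUnion_finset_le N S)
      _ ≤ ∑ _i ∈ N, ENNReal.ofReal δ := Finset.sum_le_sum hS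
      _ = ENNReal.ofReal (N.card * δ) := by
        rw [Finset.sum_const, nsmul_eq_mul, ENNReal.ofReal_mul (Nat.cast_nonneg _),
          ENNReal.ofReal_natCast]
  have hcover : 1 ≤ μ G + μ Gᶜ := by
    simpa [measure_univ] using measure_union_le (μ := μ) G Gᶜ
  rw [ENNReal.ofReal_sub _ (by positivity), ENNReal.ofReal_one, tsub_le_iff_right]
  exact hcover.trans (by gcongr)

theorem neg_mul_half_rpow_le {c γ t : ℝ} (hc : 0 ≤ c) (hγ : 0 ≤ γ) (ht : 0 ≤ t) :
    -c * (t / 2) ^ γ ≤ -c * t ^ γ / 4 ^ γ := by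
  rw [mul_div_assoc, ← Real.div_rpow ht (by norm_num)]
  have : (t / 4) ^ γ ≤ (t / 2) ^ γ := Real.rpow_le_rpow (by positivity) (by linarith) hγ
  nlinarith

theorem stmt9_general {m n : ℕ} (C₁ c₁ γ : ℝ) (hC₁ : 0 < C₁) (hc₁ : 0 < c₁) (hγ : 0 < γ)
    {Ω : Type*} [MeasurableSpace Ω] (μ : Measure Ω) [IsProbabilityMeasure μ]
    (E : Ω → Matrix (Fin m) (Fin n) ℝ) (hE : Concentrated μ E C₁ c₁ γ)
    (A : Matrix (Fin m) (Fin n) ℝ)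
    (j : ℕ) (hj1 : 1 ≤ j)
    (t : ℝ) (ht : 0 < t) :
    ENNReal.ofReal (1 - 2 * C₁ * 9 ^ j * Real.exp (-c₁ * t ^ γ / 4 ^ γ)) ≤
      μ {ω | sval A j - t ≤ sval (A + E ω) j} := by
  rcases le_or_gt (sval A j - t) 0 with hst | hst
  · have huniv : {ω | sval A j - t ≤ sval (A + E ω) j} = Set.univ :=
      Set.eq_univ_of_forall fun ω => hst.trans (sval_nonneg _ j)
    rw [huniv, measure_univ]
    exact ENNReal.ofReal_le_one.2 (sub_le_self _ (by positivity))
  obtain ⟨x, y, σ, hx, hy, hAxy, hσ⟩ := exists_orthonormal_singularVectors A hj1 (by linarith)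
  obtain ⟨N, hN, hNcard, hnet⟩ :=
    exists_finset_net_sphere (V := EuclideanSpace ℝ (Fin j)) (ε := 1 / 4) (by norm_num)
  rw [finrank_euclideanSpace_fin] at hNcard
  norm_num at hNcard
  have hbad : {ω | sval A j - t ≤ sval (A + E ω) j}ᶜ ⊆ ⋃ p ∈ N, {ω | t / 2 <
      |⟪euclideanCombination y p, toEuclideanLin (E ω) (euclideanCombination x p)⟫|} := by
    intro ω hω
    by_contra hgood
    simp only [Set.mem_iUnion, Set.mem_ofPred_eq, not_exists, not_lt] at hgood
    exact hω (sub_le_sval_add_of_net hj1 hx hy hAxy hσ hN hnet ht.le hgood)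
  refine le_trans (ENNReal.ofReal_le_ofReal (sub_le_sub_left ?_ 1))
    (ofReal_one_sub_card_mul_le_measure N _ hbad (by positivity) fun p hp =>
      hE.measure_lt_abs_inner_le (hy.norm_euclideanCombination p ▸ hN p hp)
        (hx.norm_euclideanCombination p ▸ hN p hp) (half_pos ht))
  calc (N.card : ℝ) * (C₁ * Real.exp (-c₁ * (t / 2) ^ γ))
      ≤ 9 ^ j * (C₁ * Real.exp (-c₁ * t ^ γ / 4 ^ γ)) := by
        gcongr
        exact neg_mul_half_rpow_le hc₁.le hγ.le ht.le
    _ ≤ 2 * C₁ * 9 ^ j * Real.exp (-c₁ * t ^ γ / 4 ^ γ) := by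
        nlinarith [show 0 ≤ 9 ^ j * (C₁ * Real.exp (-c₁ * t ^ γ / 4 ^ γ)) by positivity]

theorem stmt9 {m n : ℕ} (C₁ c₁ γ : ℝ) (hC₁ : 0 < C₁) (hc₁ : 0 < c₁) (hγ : 0 < γ)
    {Ω : Type*} [MeasurableSpace Ω] (μ : Measure Ω) [IsProbabilityMeasure μ]
    (E : Ω → Matrix (Fin m) (Fin n) ℝ) (hE : Concentrated μ E C₁ c₁ γ)
    (A : Matrix (Fin m) (Fin n) ℝ) (r : ℕ) (hr : A.rank = r) (hσr : 0 < sval A r)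
    (j : ℕ) (hj1 : 1 ≤ j) (hjr : j ≤ r)
    (t : ℝ) (ht : 0 < t) :
    ENNReal.ofReal (1 - 2 * C₁ * 9 ^ j * Real.exp (-c₁ * t ^ γ / 4 ^ γ)) ≤
      μ {ω | sval A j - t ≤ sval (A + E ω) j} :=
  stmt9_general C₁ c₁ γ hC₁ hc₁ hγ μ E hE A j hj1 t ht
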